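/- The polynomial h_n = x_1 y_1 + ... + x_n y_n - z(1-z) is irreducible in the polynomial ring k[x_1,...,x_n,y_1,...,y_n,z] over a field k, for n ≥ 1. -/

import Mathlib

/-!
Viewed as a polynomial in `y₁` over the other variables, `h_n = x₁ y₁ + q` with
`q = x₂ y₂ + ⋯ + x_n y_n - z(1 - z)`. Since `x₁` is prime and does not divide `q`
(setting `x₁ = 0` leaves `q` unchanged and nonzero), a factorization of this linear
polynomial must have a constant factor dividing both `x₁` and `q`, hence a unit.
-/

/-- The polynomial `h_n = x_1 y_1 + ⋯ + x_n y_n - z(1-z)` in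
`k[x_1,…,x_n,y_1,…,y_n,z]`, where `Sum.inl (Sum.inl i)` plays the role of `x_i`,
`Sum.inl (Sum.inr i)` of `y_i`, and `Sum.inr ()` of `z`. -/
noncomputable def quadricEvenPoly (k : Type*) [Field k] (n : ℕ) :
    MvPolynomial ((Fin n ⊕ Fin n) ⊕ Unit) k :=
  (∑ i : Fin n,
      MvPolynomial.X (Sum.inl (Sum.inl i)) * MvPolynomial.X (Sum.inl (Sum.inr i))) -
    MvPolynomial.X (Sum.inr ()) * (1 - MvPolynomial.X (Sum.inr ()))

namespace MvPolynomial

theorem optionEquivLeft_rename_some {R S : Type*} [CommSemiring R] (q : MvPolynomial S R) :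
    optionEquivLeft R S (rename some q) = Polynomial.C q := by
  have : (optionEquivLeft R S).toAlgHom.comp (rename some) = Polynomial.CAlgHom :=
    algHom_ext fun t => by simp [optionEquivLeft_X_some]
  exact AlgHom.congr_fun this q

theorem irreducible_X_mul_X_add {R σ : Type*} [CommRing R] [IsDomain R]
    {a s : σ} {q : MvPolynomial σ R} (has : a ≠ s) (hs : s ∉ q.vars) (ha : ¬ X a ∣ q) :
    Irreducible (X a * X s + q) := by
  classical
  obtain ⟨q, rfl⟩ := exists_rename_eq_of_vars_subset_range q (Subtype.val : {t // t ≠ s} → σ)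
    Subtype.val_injective fun t ht => ⟨⟨t, ne_of_mem_of_not_mem ht hs⟩, rfl⟩
  let Φ := (renameEquiv R (Equiv.optionSubtypeNe s).symm).trans (optionEquivLeft R {t // t ≠ s})
  have hval : (Equiv.optionSubtypeNe s).symm ∘ Subtype.val = some :=
    _root_.funext fun t : {t // t ≠ s} => Equiv.optionSubtypeNe_symm_of_ne t.2
  have hΦ : Φ (X a * X s + rename Subtype.val q) =
      Polynomial.C (X ⟨a, has⟩) * Polynomial.X + Polynomial.C q := by
    simp [Φ, rename_rename, hval, optionEquivLeft_rename_some,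
      Equiv.optionSubtypeNe_symm_of_ne has, optionEquivLeft_X_some, optionEquivLeft_X_none]
  rw [← MulEquiv.irreducible_iff Φ.toMulEquiv]
  change Irreducible (Φ _)
  rw [hΦ]
  refine Polynomial.irreducible_C_mul_X_add_C (X_ne_zero _)
    (X_prime.irreducible.isRelPrime_iff_not_dvd.mpr fun h => ha ?_)
  simpa using map_dvd (rename Subtype.val) h

end MvPolynomial

open MvPolynomial in
theorem quadricEvenPoly_irreducible (k : Type*) [Field k] (n : ℕ) (hn : 1 ≤ n) :
    Irreducible (quadricEvenPoly k n) := by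
  obtain ⟨m, rfl⟩ := Nat.exists_eq_add_of_le' hn
  set q : MvPolynomial ((Fin (m + 1) ⊕ Fin (m + 1)) ⊕ Unit) k :=
    (∑ i : Fin m, X (Sum.inl (Sum.inl i.succ)) * X (Sum.inl (Sum.inr i.succ))) -
      X (Sum.inr ()) * (1 - X (Sum.inr ())) with hq
  have hsplit : quadricEvenPoly k (m + 1) =
      X (Sum.inl (Sum.inl 0)) * X (Sum.inl (Sum.inr 0)) + q := by
    rw [quadricEvenPoly, Fin.sum_univ_succ]
    ring
  have hy₀ : Sum.inl (Sum.inr 0) ∉ q.vars := by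
    intro h
    rcases Finset.mem_union.mp (vars_sub_subset _ h) with h | h
    · obtain ⟨i, -, hi⟩ := Finset.mem_biUnion.mp (vars_sum_subset _ _ h)
      simpa [vars_X, eq_comm (a := (0 : Fin (m + 1)))] using vars_mul _ _ hi
    · simpa [vars_X] using vars_mul _ _ h
  -- For `k = 𝔽₂` the function `z(1 - z)` vanishes on all of `k`, so specialize into `k[z]`.
  let θ : MvPolynomial ((Fin (m + 1) ⊕ Fin (m + 1)) ⊕ Unit) k →ₐ[k] Polynomial k :=
    aeval (Sum.elim 0 fun _ => Polynomial.X)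
  have hθx₀ : θ (X (Sum.inl (Sum.inl 0))) = 0 := by simp [θ]
  have hθq : θ q = Polynomial.X * (Polynomial.X - Polynomial.C 1) := by
    simp only [θ, hq, map_sub, map_sum, map_mul, aeval_X, Sum.elim_inl, Sum.elim_inr,
      Pi.zero_apply, mul_zero, Finset.sum_const_zero, map_one, zero_sub]
    ring
  have hx₀ : ¬ X (Sum.inl (Sum.inl 0)) ∣ q := fun h => by
    have := map_dvd θ h
    rw [hθq, hθx₀, zero_dvd_iff] at this
    exact mul_ne_zero Polynomial.X_ne_zero (Polynomial.X_sub_C_ne_zero 1) this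
  rw [hsplit]
  exact irreducible_X_mul_X_add (by simp) hy₀ hx₀
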